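/- Let n and Γ be positive natural numbers, for each x ∈ Fin n let V_x be a finite-dimensional complex inner product space with dim V_x ≥ 2 and φ_x ∈ V_x a unit vector, and let 𝓗 = ⨂_x V_x with product vector φ = ⨂_x φ_x. Let Y₁, …, Y_Γ be pairwise disjoint nonempty subsets of Fin n whose union is all of Fin n. For each i ∈ {1,…,Γ} define Qᵢ = ⨂_x B_x^{(i)} where B_x^{(i)} is the orthogonal projection of V_x onto span(φ_x) if x ∈ Yᵢ and B_x^{(i)} = id otherwise, and set gᵢ = id − Qᵢ. Let U be a unitary operator on 𝓗 and define G = Σᵢ U ∘ gᵢ ∘ U*. Then the spectrum of G equals {0, 1, …, Γ}, the eigenspace of G for eigenvalue 0 is one-dimensional, and it is spanned by U φ. -/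

import Mathlib

open scoped InnerProductSpace


open scoped TensorProduct

noncomputable section

/-- The orthogonal projection onto the span of a vector `φ` in a complex inner product
space, as a linear map: `v ↦ ⟨φ, v⟩ • φ` (for a unit vector `φ` this is the orthogonal
projection onto `span {φ}`). -/
def spanProj {V : Type*} [NormedAddCommGroup V] [InnerProductSpace ℂ V] (φ : V) :
    V →ₗ[ℂ] V :=
  LinearMap.smulRight (innerSL ℂ φ).toLinearMap φ

lemma my_eigenspace_conj {M : Type*} [AddCommGroup M] [Module ℂ M]
    (H : M →ₗ[ℂ] M) (U : M ≃ₗ[ℂ] M) (μ : ℂ) :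
    Module.End.eigenspace (U.toLinearMap ∘ₗ H ∘ₗ U.symm.toLinearMap) μ
      = (Module.End.eigenspace H μ).map U.toLinearMap := by
  ext v
  have hmm : v ∈ Submodule.map U.toLinearMap (Module.End.eigenspace H μ)
      ↔ U.symm v ∈ Module.End.eigenspace H μ := by
    rw [Submodule.mem_map]
    constructor
    · rintro ⟨y, hy, rfl⟩; simpa using hy
    · intro h; exact ⟨U.symm v, h, by simp⟩
  rw [hmm, Module.End.mem_eigenspace_iff, Module.End.mem_eigenspace_iff]
  have h1 : (U.toLinearMap ∘ₗ H ∘ₗ U.symm.toLinearMap) v = U (H (U.symm v)) := rfl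
  rw [h1, show μ • v = U (μ • U.symm v) by rw [map_smul]; simp]
  exact U.injective.eq_iff

lemma my_onb_ext {Vx : Type*} [NormedAddCommGroup Vx] [InnerProductSpace ℂ Vx]
    [FiniteDimensional ℂ Vx] (φx : Vx) (hφ : ‖φx‖ = 1) (i₀ : Fin (Module.finrank ℂ Vx)) :
    ∃ b : OrthonormalBasis (Fin (Module.finrank ℂ Vx)) ℂ Vx, b i₀ = φx := by
  have hon : Orthonormal ℂ (Set.restrict {i₀} (fun _ : Fin (Module.finrank ℂ Vx) => φx)) := by
    rw [orthonormal_iff_ite]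
    rintro ⟨i, hi⟩ ⟨j, hj⟩
    simp only [Set.mem_singleton_iff] at hi hj
    subst hi; subst hj
    simp only [Set.restrict_apply, if_pos rfl]
    rw [@inner_self_eq_norm_sq_to_K ℂ]
    change ((‖φx‖ : ℝ) : ℂ) ^ 2 = _
    rw [hφ]
    norm_num
  obtain ⟨b, hb⟩ := hon.exists_orthonormalBasis_extension_of_card_eq (by simp)
  exact ⟨b, hb i₀ rfl⟩

/-- Parent Hamiltonian of a time-evolved product state.  The unitary `U` is modelled as a
linear automorphism of the tensor product, its adjoint `U*` being its inverse `U.symm`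
(for a unitary operator the adjoint coincides with the inverse). -/
theorem time_evolved_product_state_parent_hamiltonian
    (n Γ : ℕ) (hn : 0 < n) (hΓ : 0 < Γ)
    (V : Fin n → Type*) [∀ x, NormedAddCommGroup (V x)] [∀ x, InnerProductSpace ℂ (V x)]
    [∀ x, FiniteDimensional ℂ (V x)] (hdim : ∀ x, 2 ≤ Module.finrank ℂ (V x))
    (φ : (x : Fin n) → V x) (hφ : ∀ x, ‖φ x‖ = 1)
    (Y : Fin Γ → Finset (Fin n))
    (hYne : ∀ i, (Y i).Nonempty)
    (hYdisj : ∀ i j, i ≠ j → Disjoint (Y i) (Y j))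
    (hYcover : ∀ x : Fin n, ∃ i, x ∈ Y i)
    (Q : Fin Γ → ((⨂[ℂ] x, V x) →ₗ[ℂ] ⨂[ℂ] x, V x))
    (hQ : Q = fun i => PiTensorProduct.map
      (fun x => if x ∈ Y i then spanProj (φ x) else LinearMap.id))
    (g : Fin Γ → ((⨂[ℂ] x, V x) →ₗ[ℂ] ⨂[ℂ] x, V x))
    (hg : g = fun i => LinearMap.id - Q i)
    (U : (⨂[ℂ] x, V x) ≃ₗ[ℂ] ⨂[ℂ] x, V x)
    (G : (⨂[ℂ] x, V x) →ₗ[ℂ] ⨂[ℂ] x, V x)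
    (hG : G = ∑ i, U.toLinearMap ∘ₗ g i ∘ₗ U.symm.toLinearMap) :
    {μ : ℂ | Module.End.HasEigenvalue G μ} = (fun k : ℕ => (k : ℂ)) '' {k | k ≤ Γ} ∧
    Module.finrank ℂ ↥(Module.End.eigenspace G 0) = 1 ∧
    Module.End.eigenspace G 0 = Submodule.span ℂ {U (PiTensorProduct.tprod ℂ φ)} := by
  classical
  set H : (⨂[ℂ] x, V x) →ₗ[ℂ] ⨂[ℂ] x, V x := ∑ i, g i with hH
  have hGH : G = U.toLinearMap ∘ₗ H ∘ₗ U.symm.toLinearMap := by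
    rw [hG]
    ext v
    simp [hH, LinearMap.sum_apply, map_sum]
  -- orthonormal bases extending φ
  have hzlt : ∀ x, 0 < Module.finrank ℂ (V x) := fun x =>
    lt_of_lt_of_le two_pos (hdim x)
  have hbex : ∀ x, ∃ b : OrthonormalBasis (Fin (Module.finrank ℂ (V x))) ℂ (V x),
      b ⟨0, hzlt x⟩ = φ x := fun x => my_onb_ext (φ x) (hφ x) _
  choose b hb using hbex
  set z : ∀ x, Fin (Module.finrank ℂ (V x)) := fun x => ⟨0, hzlt x⟩ with hz
  have hbb : ∀ x (i j : Fin (Module.finrank ℂ (V x))),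
      ⟪b x i, b x j⟫_ℂ = if i = j then 1 else 0 := fun x =>
    orthonormal_iff_ite.mp (b x).orthonormal
  set e : (∀ x, Fin (Module.finrank ℂ (V x))) → (⨂[ℂ] x, V x) :=
    fun f => PiTensorProduct.tprod ℂ (fun x => b x (f x)) with he
  set ε : (∀ x, Fin (Module.finrank ℂ (V x))) → ((⨂[ℂ] x, V x) →ₗ[ℂ] ℂ) :=
    fun f => PiTensorProduct.lift
      ((MultilinearMap.mkPiAlgebra ℂ (Fin n) ℂ).compLinearMap
        (fun x => (innerSL ℂ (b x (f x))).toLinearMap)) with hε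
  have hεe : ∀ f f', ε f (e f') = if f = f' then 1 else 0 := by
    intro f f'
    rw [hε, he]
    simp only [PiTensorProduct.lift.tprod, MultilinearMap.compLinearMap_apply,
      MultilinearMap.mkPiAlgebra_apply, ContinuousLinearMap.coe_coe, innerSL_apply_apply, hbb]
    by_cases h : f = f'
    · subst h; simp
    · rw [if_neg h]
      obtain ⟨x, hx⟩ := Function.ne_iff.mp h
      exact Finset.prod_eq_zero (Finset.mem_univ x) (if_neg hx)
  have hene : ∀ f, e f ≠ 0 := by
    intro f hf
    have := hεe f f
    rw [hf, map_zero, if_pos rfl] at this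
    exact one_ne_zero this.symm
  -- spanning
  have hspan : ∀ v : ⨂[ℂ] x, V x, v ∈ Submodule.span ℂ (Set.range e) := by
    intro v
    induction v using PiTensorProduct.induction_on with
    | smul_tprod r w =>
      apply Submodule.smul_mem
      have hw : PiTensorProduct.tprod ℂ w
          = ∑ f : ∀ x, Fin (Module.finrank ℂ (V x)),
              (∏ x, (b x).repr (w x) (f x)) • e f := by
        conv_lhs => rw [show w = fun x => ∑ k, (b x).repr (w x) k • b x k from
          funext fun x => ((b x).sum_repr (w x)).symm]
        rw [MultilinearMap.map_sum]
        exact Finset.sum_congr rfl fun f _ => MultilinearMap.map_smul_univ _ _ _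
      rw [hw]
      exact Submodule.sum_mem _ fun f _ =>
        Submodule.smul_mem _ _ (Submodule.subset_span ⟨f, rfl⟩)
    | add u v hu hv => exact Submodule.add_mem _ hu hv
  have hrep : ∀ v : ⨂[ℂ] x, V x, v = ∑ f, ε f v • e f := by
    intro v
    obtain ⟨c, hc⟩ := Submodule.mem_span_range_iff_exists_fun ℂ |>.mp (hspan v)
    have hcf : ∀ f', ε f' v = c f' := by
      intro f'
      rw [← hc, map_sum]
      simp only [map_smul, hεe, smul_eq_mul]
      rw [Finset.sum_eq_single f']
      · simp
      · intro f _ hff; rw [if_neg (Ne.symm hff), mul_zero]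
      · intro h; exact absurd (Finset.mem_univ f') h
    simp only [hcf]
    exact hc.symm
  -- action of g i on basis vectors
  set P : (∀ x, Fin (Module.finrank ℂ (V x))) → Fin Γ → Prop :=
    fun f i => ∃ x ∈ Y i, f x ≠ z x with hP
  have hgie : ∀ i f, g i (e f) = if P f i then e f else 0 := by
    intro i f
    have hQe : Q i (e f) = PiTensorProduct.tprod ℂ
        (fun x => if x ∈ Y i then spanProj (φ x) (b x (f x)) else b x (f x)) := by
      rw [hQ, he]
      simp only [PiTensorProduct.map_tprod]
      congr 1
      funext x
      by_cases hx : x ∈ Y i <;> simp [hx]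
    have hsp : ∀ x, spanProj (φ x) (b x (f x))
        = if f x = z x then b x (z x) else 0 := by
      intro x
      have hb' : b x (z x) = φ x := hb x
      rw [spanProj, LinearMap.smulRight_apply, ContinuousLinearMap.coe_coe, innerSL_apply_apply,
        ← hb', hbb]
      by_cases hzx : z x = f x
      · rw [if_pos hzx, if_pos hzx.symm, one_smul, hzx]
      · rw [if_neg hzx, if_neg (Ne.symm hzx), zero_smul]
    by_cases hPf : P f i
    · rw [if_pos hPf]
      obtain ⟨x₀, hx₀Y, hx₀⟩ := hPf
      have h0 : (fun x => if x ∈ Y i then spanProj (φ x) (b x (f x)) else b x (f x)) x₀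
          = 0 := by
        simp only [if_pos hx₀Y, hsp, if_neg hx₀]
      have hQ0 : Q i (e f) = 0 := by
        rw [hQe]
        exact (PiTensorProduct.tprod ℂ).map_coord_zero x₀ h0
      rw [hg]
      simp [hQ0]
    · rw [if_neg hPf]
      have hPf' : ∀ x ∈ Y i, f x = z x := by
        intro x hx
        by_contra hne
        exact hPf ⟨x, hx, hne⟩
      have hQid : Q i (e f) = e f := by
        rw [hQe, he]
        congr 1
        funext x
        by_cases hx : x ∈ Y i
        · rw [if_pos hx, hsp, if_pos (hPf' x hx), hPf' x hx]
        · rw [if_neg hx]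
      rw [hg]
      simp [hQid]
  set d : (∀ x, Fin (Module.finrank ℂ (V x))) → ℂ :=
    fun f => ((Finset.univ.filter (P f)).card : ℂ) with hd
  have hHe : ∀ f, H (e f) = d f • e f := by
    intro f
    rw [hH, LinearMap.sum_apply]
    simp only [hgie]
    have : ∀ i : Fin Γ, (if P f i then e f else 0) = (if P f i then (1:ℂ) else 0) • e f := by
      intro i; by_cases h : P f i <;> simp [h]
    rw [Finset.sum_congr rfl fun i _ => this i, ← Finset.sum_smul, hd]
    congr 1
    convert (Finset.natCast_card_filter (R := ℂ) (P f) Finset.univ).symm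
  -- key coefficient identity for eigenvectors
  have sumlemma : ∀ (f : ∀ x, Fin (Module.finrank ℂ (V x)))
      (c : (∀ x, Fin (Module.finrank ℂ (V x))) → ℂ),
      ε f (∑ f', c f' • e f') = c f := by
    intro f c
    rw [map_sum]
    simp only [map_smul, hεe, smul_eq_mul]
    rw [Finset.sum_eq_single f]
    · simp
    · intro f' _ hff
      rw [if_neg (fun hh => hff hh.symm), mul_zero]
    · intro hmem
      exact absurd (Finset.mem_univ f) hmem
  have hkey : ∀ (v : ⨂[ℂ] x, V x) (μ : ℂ), H v = μ • v →
      ∀ f, d f * ε f v = μ * ε f v := by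
    intro v μ hv f
    have h1 : H v = ∑ f', (d f' * ε f' v) • e f' := by
      conv_lhs => rw [hrep v]
      rw [map_sum]
      refine Finset.sum_congr rfl fun f' _ => ?_
      rw [map_smul, hHe, smul_smul, mul_comm]
    have h2 : μ • v = ∑ f', (μ * ε f' v) • e f' := by
      conv_lhs => rw [hrep v]
      rw [Finset.smul_sum]
      refine Finset.sum_congr rfl fun f' _ => ?_
      rw [smul_smul]
    have h3 : (∑ f', (d f' * ε f' v) • e f') = ∑ f', (μ * ε f' v) • e f' :=
      h1.symm.trans (hv.trans h2)
    have h4 := congrArg (ε f) h3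
    rwa [sumlemma, sumlemma] at h4
  -- d z = 0 and d f ≠ 0 for f ≠ z
  have hdz : d z = 0 := by
    simp only [hd]
    norm_cast
    rw [Finset.card_eq_zero, Finset.filter_eq_empty_iff]
    intro i _
    intro hcon
    obtain ⟨x, hx, hne⟩ := hcon
    exact hne rfl
  have hdne : ∀ f, f ≠ z → d f ≠ 0 := by
    intro f hf
    rw [hd, Nat.cast_ne_zero]
    obtain ⟨x, hx⟩ := Function.ne_iff.mp hf
    obtain ⟨i, hi⟩ := hYcover x
    exact Finset.card_ne_zero_of_mem
      (Finset.mem_filter.mpr ⟨Finset.mem_univ i, ⟨x, hi, hx⟩⟩)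
  -- the set of diagonal values is exactly {0, ..., Γ}
  have hdsurj : ∀ k : ℕ, k ≤ Γ → ∃ f, d f = k := by
    intro k hk
    have hone : ∀ x, 1 < Module.finrank ℂ (V x) := fun x =>
      lt_of_lt_of_le one_lt_two (hdim x)
    set f : ∀ x, Fin (Module.finrank ℂ (V x)) := fun x =>
      if ∃ i : Fin Γ, (i : ℕ) < k ∧ x ∈ Y i then ⟨1, hone x⟩ else z x with hf
    refine ⟨f, ?_⟩
    simp only [hd]
    have hfil : Finset.univ.filter (P f) = Finset.univ.filter (fun i : Fin Γ => (i:ℕ) < k) := by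
      ext i
      simp only [Finset.mem_filter, Finset.mem_univ, true_and]
      constructor
      · intro hcon
        obtain ⟨x, hxY, hfx⟩ := hcon
        by_cases hex : ∃ j : Fin Γ, (j:ℕ) < k ∧ x ∈ Y j
        · obtain ⟨j, hj, hxj⟩ := hex
          have hij : i = j := by
            by_contra hij
            exact (Finset.disjoint_left.mp (hYdisj i j hij)) hxY hxj
          rw [hij]; exact hj
        · exfalso
          apply hfx
          rw [hf]
          simp only
          rw [if_neg hex]
      · intro hi
        obtain ⟨x, hx⟩ := hYne i
        refine ⟨x, hx, ?_⟩
        rw [hf]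
        simp only
        rw [if_pos ⟨i, hi, hx⟩]
        intro hcon
        have := congrArg Fin.val hcon
        simp only [hz] at this
        exact one_ne_zero this
      
    rw [hfil]
    have hcard : (Finset.univ.filter (fun i : Fin Γ => (i:ℕ) < k)).card = k := by
      apply Finset.card_eq_of_bijective (fun j hj => (⟨j, lt_of_lt_of_le hj hk⟩ : Fin Γ))
      · intro a ha
        rw [Finset.mem_filter] at ha
        exact ⟨(a : ℕ), ha.2, Fin.ext rfl⟩
      · intro j hj
        rw [Finset.mem_filter]
        exact ⟨Finset.mem_univ _, hj⟩
      · intro i j hi hj hEq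
        exact congrArg Fin.val hEq
    rw [hcard]
  -- eigenvalues of H
  have hHasH : ∀ μ : ℂ, Module.End.HasEigenvalue H μ ↔ ∃ f, d f = μ := by
    intro μ
    constructor
    · intro hμ
      obtain ⟨v, hv⟩ := hμ.exists_hasEigenvector
      have hveq : H v = μ • v := hv.apply_eq_smul
      have hvne := hv.right
      by_contra hno
      push_neg at hno
      apply hvne
      rw [hrep v]
      apply Finset.sum_eq_zero
      intro f _
      have hkf := hkey v μ hveq f
      have hsub : (d f - μ) * ε f v = 0 := by ring_nf; linear_combination hkf
      rcases mul_eq_zero.mp hsub with h | h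
      · exact absurd (sub_eq_zero.mp h) (hno f)
      · rw [h, zero_smul]
    · rintro ⟨f, rfl⟩
      exact Module.End.hasEigenvalue_of_hasEigenvector
        ⟨Module.End.mem_eigenspace_iff.mpr (hHe f), hene f⟩
  -- zero eigenspace of H
  have hH0 : Module.End.eigenspace H 0 = Submodule.span ℂ {e z} := by
    apply le_antisymm
    · intro v hv
      rw [Module.End.mem_eigenspace_iff] at hv
      have hco := hkey v 0 hv
      rw [hrep v]
      apply Submodule.sum_mem
      intro f _
      by_cases hfz : f = z
      · subst hfz
        exact Submodule.smul_mem _ _ (Submodule.mem_span_singleton_self _)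
      · have h0 : ε f v = 0 := by
          have := hco f
          rw [zero_mul] at this
          exact (mul_eq_zero.mp this).resolve_left (hdne f hfz)
        rw [h0, zero_smul]
        exact Submodule.zero_mem _
    · rw [Submodule.span_le, Set.singleton_subset_iff]
      rw [SetLike.mem_coe, Module.End.mem_eigenspace_iff, hHe, hdz]
  have hezφ : e z = PiTensorProduct.tprod ℂ φ := by
    rw [he]
    exact congrArg _ (funext fun x => hb x)
  -- conjugation
  have hconj : ∀ μ : ℂ, Module.End.HasEigenvalue G μ ↔ Module.End.HasEigenvalue H μ := by
    intro μ
    rw [hGH, Module.End.hasEigenvalue_iff, Module.End.hasEigenvalue_iff, my_eigenspace_conj]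
    constructor
    · intro hne hbot
      apply hne
      rw [hbot, Submodule.map_bot]
    · intro hne hbot
      apply hne
      have := Submodule.map_injective_of_injective (f := U.toLinearMap) U.injective
      apply this
      rw [Submodule.map_bot]
      rw [← hbot]
  have hG0 : Module.End.eigenspace G 0 = Submodule.span ℂ {U (PiTensorProduct.tprod ℂ φ)} := by
    rw [hGH, my_eigenspace_conj, hH0, ← hezφ]
    have : Submodule.map U.toLinearMap (Submodule.span ℂ {e z}) = Submodule.span ℂ (U '' {e z}) :=
      Submodule.map_span _ _
    rw [this, Set.image_singleton]
  have hUne : U (PiTensorProduct.tprod ℂ φ) ≠ 0 := by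
    rw [← hezφ]
    intro hcon
    exact hene z (U.map_eq_zero_iff.mp hcon)
  refine ⟨?_, ?_, hG0⟩
  · ext μ
    simp only [Set.mem_setOf_eq, Set.mem_image]
    rw [hconj, hHasH]
    constructor
    · rintro ⟨f, rfl⟩
      refine ⟨(Finset.univ.filter (P f)).card, ?_, ?_⟩
      · calc (Finset.univ.filter (P f)).card ≤ Finset.univ.card := Finset.card_filter_le _ _
          _ = Γ := by simp
      · rw [hd]
    · rintro ⟨k, hk, rfl⟩
      exact hdsurj k hk
  · rw [hG0]
    exact finrank_span_singleton hUne


end
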